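/- arXiv:math/0109077 — 9 statements merged into one kernel-verified Lean document; each statement's English description precedes it below -/
import Mathlib

section
/- Let g be a nilpotent real Lie algebra of dimension 2p+1 (p ≥ 1) admitting a contact form ω. Then the center Z(g) of g is exactly one-dimensional. -/
/-!
A central element `z` satisfies `ω ⁅z, Y⁆ = 0` for every `Y`, so the contact condition forbids
`ω z = 0` unless `z = 0`: `ω` is injective on the center, which therefore has dimension at most
one. Nilpotency makes the center nonzero, since `ω ≠ 0` forces `L ≠ 0`.
-/

open LieAlgebra

section Contact

variable {K L : Type*} [Field K] [LieRing L] [LieAlgebra K L] (ω : L →ₗ[K] K)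

theorem LieAlgebra.injective_comp_center_subtype_of_contact
    (hcontact : ∀ X : L, ω X = 0 → (∀ Y : L, ω Y = 0 → ω ⁅X, Y⁆ = 0) → X = 0) :
    Function.Injective (ω ∘ₗ (center K L).toSubmodule.subtype) := by
  rw [← LinearMap.ker_eq_bot, LinearMap.ker_eq_bot']
  rintro ⟨z, hz⟩ hωz
  have hz_lie : ∀ Y : L, ⁅z, Y⁆ = 0 := fun Y => by rw [← lie_skew, hz Y, neg_zero]
  exact Subtype.ext <| hcontact z hωz fun Y _ => by rw [hz_lie Y, map_zero]

theorem LieAlgebra.finrank_center_le_one_of_contact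
    (hcontact : ∀ X : L, ω X = 0 → (∀ Y : L, ω Y = 0 → ω ⁅X, Y⁆ = 0) → X = 0) :
    Module.finrank K (center K L) ≤ 1 :=
  (LinearMap.finrank_le_finrank_of_injective
    (injective_comp_center_subtype_of_contact ω hcontact)).trans_eq (Module.finrank_self K)

end Contact

theorem finrank_center_eq_one_of_contact_nilpotent_general
    (L : Type*) [LieRing L] [LieAlgebra ℝ L] [FiniteDimensional ℝ L]
    [LieRing.IsNilpotent L]
    (ω : L →ₗ[ℝ] ℝ) (hω : ω ≠ 0)
    (hcontact : ∀ X : L, ω X = 0 → (∀ Y : L, ω Y = 0 → ω ⁅X, Y⁆ = 0) → X = 0) :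
    Module.finrank ℝ (LieAlgebra.center ℝ L) = 1 := by
  have : Nontrivial L := by
    obtain ⟨x, hx⟩ := DFunLike.ne_iff.mp hω
    exact nontrivial_of_ne x 0 fun h => hx (by rw [h, map_zero, LinearMap.zero_apply])
  have : Nontrivial (center ℝ L) := non_trivial_center_of_isNilpotent (R := ℝ)
  exact le_antisymm (finrank_center_le_one_of_contact ω hcontact) Module.finrank_pos

/-- Let `g` be a nilpotent real Lie algebra of dimension `2p+1` (`p ≥ 1`)
admitting a contact form `ω`.  Then the center `Z(g)` is exactly one-dimensional. -/
theorem finrank_center_eq_one_of_contact_nilpotent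
    (L : Type*) [LieRing L] [LieAlgebra ℝ L] [FiniteDimensional ℝ L]
    [LieRing.IsNilpotent L]
    (p : ℕ) (hp : 1 ≤ p) (hdim : Module.finrank ℝ L = 2 * p + 1)
    (ω : L →ₗ[ℝ] ℝ) (hω : ω ≠ 0)
    (hcontact : ∀ X : L, ω X = 0 → (∀ Y : L, ω Y = 0 → ω ⁅X, Y⁆ = 0) → X = 0) :
    Module.finrank ℝ (LieAlgebra.center ℝ L) = 1 :=
  finrank_center_eq_one_of_contact_nilpotent_general L ω hω hcontact
end

section
/- Let g be a nilpotent real Lie algebra of dimension 2p+1 (p ≥ 1) with contact form ω. Then the bilinear form θ defined on the quotient Lie algebra g/Z(g) by θ(X̄, Ȳ) = ω([X,Y]) (where X̄ denotes the class of X modulo the center Z(g)) is well defined (independent of the choice of representatives), alternating, nondegenerate, and satisfies the 2-cocycle identity θ([X̄,Ȳ],Z̄) + θ([Ȳ,Z̄],X̄) + θ([Z̄,X̄],Ȳ) = 0; that is, g/Z(g) is a symplectic Lie algebra. -/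
/-!
A nilpotent Lie algebra has nonzero center, and a contact form `ω` cannot vanish on a nonzero
central element `z`. So if `ω ⁅x, ·⁆ = 0`, then `x - (ω x / ω z) • z` lies in `ker ω` and pairs to
zero with everything, hence is zero by the contact condition: the radical of `(X, Y) ↦ ω ⁅X, Y⁆` is
exactly the center, and the form descends to a nondegenerate form on `g ⧸ Z(g)`. The cocycle
identity is `ω` applied to the Jacobi identity.
-/

namespace Submodule

variable {R M P : Type*} [CommRing R] [AddCommGroup M] [Module R M] [AddCommGroup P] [Module R P]

def liftQ₂ (p : Submodule R M) (f : M →ₗ[R] M →ₗ[R] P) (h₁ : p ≤ LinearMap.ker f)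
    (h₂ : p ≤ LinearMap.ker f.flip) : (M ⧸ p) →ₗ[R] (M ⧸ p) →ₗ[R] P :=
  (p.liftQ (p.liftQ f h₁).flip fun y hy => by
    ext x
    exact LinearMap.congr_fun (h₂ hy) x).flip

end Submodule

theorem lie_lie_add_lie_lie_add_lie_lie {L : Type*} [LieRing L] (x y z : L) :
    ⁅⁅x, y⁆, z⁆ + ⁅⁅y, z⁆, x⁆ + ⁅⁅z, x⁆, y⁆ = 0 := by
  rw [← lie_skew ⁅x, y⁆ z, ← lie_skew ⁅y, z⁆ x, ← lie_skew ⁅z, x⁆ y, ← neg_add, ← neg_add,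
    neg_eq_zero, lie_jacobi]

namespace LieAlgebra

section CommRing

variable {R L M : Type*} [CommRing R] [LieRing L] [LieAlgebra R L] [AddCommGroup M] [Module R M]

theorem mem_center_iff_lie_eq_zero {x : L} : x ∈ center R L ↔ ∀ y : L, ⁅x, y⁆ = 0 := by
  rw [← self_module_ker_eq_center, LieModule.mem_ker]

def bracketForm (ω : L →ₗ[R] M) : L →ₗ[R] L →ₗ[R] M :=
  (ad R L : L →ₗ[R] Module.End R L).compr₂ ω

@[simp]
theorem bracketForm_apply (ω : L →ₗ[R] M) (x y : L) : bracketForm ω x y = ω ⁅x, y⁆ :=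
  rfl

def quotCenterForm (ω : L →ₗ[R] M) : (L ⧸ center R L) →ₗ[R] (L ⧸ center R L) →ₗ[R] M :=
  (center R L).toSubmodule.liftQ₂ (bracketForm ω)
    (fun z hz => LinearMap.ext fun y => by simp [mem_center_iff_lie_eq_zero.mp hz y])
    (fun z hz => LinearMap.ext fun x => by simp [(LieModule.mem_maxTrivSubmodule R L L z).mp hz x])

@[simp]
theorem quotCenterForm_mk (ω : L →ₗ[R] M) (x y : L) :
    quotCenterForm ω (LieSubmodule.Quotient.mk x) (LieSubmodule.Quotient.mk y) = ω ⁅x, y⁆ :=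
  rfl

theorem quotCenterForm_self (ω : L →ₗ[R] M) (U : L ⧸ center R L) : quotCenterForm ω U U = 0 := by
  obtain ⟨x, rfl⟩ := LieSubmodule.Quotient.surjective_mk' _ U
  simp

theorem quotCenterForm_cocycle (ω : L →ₗ[R] M) (U V W : L ⧸ center R L) :
    quotCenterForm ω ⁅U, V⁆ W + quotCenterForm ω ⁅V, W⁆ U + quotCenterForm ω ⁅W, U⁆ V = 0 := by
  obtain ⟨x, rfl⟩ := LieSubmodule.Quotient.surjective_mk' _ U
  obtain ⟨y, rfl⟩ := LieSubmodule.Quotient.surjective_mk' _ V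
  obtain ⟨z, rfl⟩ := LieSubmodule.Quotient.surjective_mk' _ W
  simp only [LieSubmodule.Quotient.mk'_apply, ← LieSubmodule.Quotient.mk_bracket,
    quotCenterForm_mk, ← map_add, lie_lie_add_lie_lie_add_lie_lie, map_zero]

end CommRing

section Field

variable {K L : Type*} [Field K] [LieRing L] [LieAlgebra K L]

def IsContactForm (ω : L →ₗ[K] K) : Prop :=
  ∀ x : L, ω x = 0 → (∀ y : L, ω y = 0 → ω ⁅x, y⁆ = 0) → x = 0

namespace IsContactForm

variable {ω : L →ₗ[K] K}

theorem apply_ne_zero_of_mem_center (hω : IsContactForm ω) {z : L} (hz : z ∈ center K L)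
    (hz₀ : z ≠ 0) : ω z ≠ 0 :=
  fun h => hz₀ <| hω z h fun y _ => by rw [mem_center_iff_lie_eq_zero.mp hz y, map_zero]

theorem mem_center_of_forall_apply_lie_eq_zero [LieRing.IsNilpotent L] (hω : IsContactForm ω)
    {x : L} (hx : ∀ y : L, ω ⁅x, y⁆ = 0) : x ∈ center K L := by
  rcases subsingleton_or_nontrivial L with hL | hL
  · exact Subsingleton.elim (0 : L) x ▸ zero_mem (center K L)
  have := non_trivial_center_of_isNilpotent (R := K) (L := L)
  obtain ⟨⟨z, hz⟩, hz₀⟩ := exists_ne (0 : center K L)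
  have hz₀ : z ≠ 0 := fun h => hz₀ (Subtype.ext h)
  have hxz : x - (ω x / ω z) • z = 0 := by
    refine hω _ ?_ fun y _ => ?_
    · rw [map_sub, map_smul, smul_eq_mul,
        div_mul_cancel₀ _ (hω.apply_ne_zero_of_mem_center hz hz₀), sub_self]
    · rw [sub_lie, smul_lie, mem_center_iff_lie_eq_zero.mp hz y, smul_zero, sub_zero, hx]
  rw [sub_eq_zero.mp hxz]
  exact (center K L).smul_mem _ hz

theorem eq_zero_of_forall_quotCenterForm_eq_zero [LieRing.IsNilpotent L] (hω : IsContactForm ω)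
    {U : L ⧸ center K L} (hU : ∀ V, quotCenterForm ω U V = 0) : U = 0 := by
  obtain ⟨x, rfl⟩ := LieSubmodule.Quotient.surjective_mk' _ U
  rw [LieSubmodule.Quotient.mk_eq_zero]
  exact hω.mem_center_of_forall_apply_lie_eq_zero fun y => hU (LieSubmodule.Quotient.mk y)

end IsContactForm

end Field

end LieAlgebra

theorem quotient_center_symplectic_of_contact_nilpotent_general
    (L : Type*) [LieRing L] [LieAlgebra ℝ L]
    [LieRing.IsNilpotent L]
    (ω : L →ₗ[ℝ] ℝ)
    (hcontact : ∀ X : L, ω X = 0 → (∀ Y : L, ω Y = 0 → ω ⁅X, Y⁆ = 0) → X = 0) :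
    ∃ θ : (L ⧸ LieAlgebra.center ℝ L) →ₗ[ℝ] (L ⧸ LieAlgebra.center ℝ L) →ₗ[ℝ] ℝ,
      (∀ X Y : L,
        θ (LieSubmodule.Quotient.mk' (LieAlgebra.center ℝ L) X)
          (LieSubmodule.Quotient.mk' (LieAlgebra.center ℝ L) Y) = ω ⁅X, Y⁆) ∧
      (∀ U : L ⧸ LieAlgebra.center ℝ L, θ U U = 0) ∧
      (∀ U : L ⧸ LieAlgebra.center ℝ L, (∀ V, θ U V = 0) → U = 0) ∧
      (∀ U V W : L ⧸ LieAlgebra.center ℝ L,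
        θ ⁅U, V⁆ W + θ ⁅V, W⁆ U + θ ⁅W, U⁆ V = 0) :=
  ⟨LieAlgebra.quotCenterForm ω, LieAlgebra.quotCenterForm_mk ω, LieAlgebra.quotCenterForm_self ω,
    fun _ => LieAlgebra.IsContactForm.eq_zero_of_forall_quotCenterForm_eq_zero hcontact,
    LieAlgebra.quotCenterForm_cocycle ω⟩

/-- Let `g` be a nilpotent real Lie algebra of dimension `2p+1` (`p ≥ 1`) with
contact form `ω`.  Then the bilinear form `θ` on `g/Z(g)` defined by `θ(X̄,Ȳ) = ω ⁅X,Y⁆` is well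
defined, alternating, nondegenerate, and is a 2-cocycle: `g/Z(g)` is a symplectic Lie algebra. -/
theorem quotient_center_symplectic_of_contact_nilpotent
    (L : Type*) [LieRing L] [LieAlgebra ℝ L] [FiniteDimensional ℝ L]
    [LieRing.IsNilpotent L]
    (p : ℕ) (hp : 1 ≤ p) (hdim : Module.finrank ℝ L = 2 * p + 1)
    (ω : L →ₗ[ℝ] ℝ) (hω : ω ≠ 0)
    (hcontact : ∀ X : L, ω X = 0 → (∀ Y : L, ω Y = 0 → ω ⁅X, Y⁆ = 0) → X = 0) :
    ∃ θ : (L ⧸ LieAlgebra.center ℝ L) →ₗ[ℝ] (L ⧸ LieAlgebra.center ℝ L) →ₗ[ℝ] ℝ,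
      (∀ X Y : L,
        θ (LieSubmodule.Quotient.mk' (LieAlgebra.center ℝ L) X)
          (LieSubmodule.Quotient.mk' (LieAlgebra.center ℝ L) Y) = ω ⁅X, Y⁆) ∧
      (∀ U : L ⧸ LieAlgebra.center ℝ L, θ U U = 0) ∧
      (∀ U : L ⧸ LieAlgebra.center ℝ L, (∀ V, θ U V = 0) → U = 0) ∧
      (∀ U V W : L ⧸ LieAlgebra.center ℝ L,
        θ ⁅U, V⁆ W + θ ⁅V, W⁆ U + θ ⁅W, U⁆ V = 0) :=
  quotient_center_symplectic_of_contact_nilpotent_general L ω hcontact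
end

section
/- Let g be a finite-dimensional real Lie algebra equipped with a symplectic form θ. Then there is a unique bilinear map ∇ : g × g → g satisfying θ(∇(X,Y),Z) = −θ(Y,[X,Z]) for all X, Y, Z ∈ g, and this ∇ is an affine structure on g: it satisfies ∇(X,Y) − ∇(Y,X) = [X,Y] and ∇(X,∇(Y,Z)) − ∇(Y,∇(X,Z)) = ∇([X,Y],Z) for all X, Y, Z ∈ g. -/
/-!
Nondegeneracy identifies `g` with its dual, so `θ(∇(X,Y), ·) = -θ(Y, ⁅X, ·⁆)` defines `∇`
uniquely. Flatness follows from the Jacobi identity alone, since `θ(∇(X,∇(Y,Z)), W) =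
θ(Z, ⁅Y, ⁅X, W⁆⁆)`. Torsion-freeness is the cocycle identity read as
`θ(⁅X,Y⁆, Z) = θ(X, ⁅Y,Z⁆) - θ(Y, ⁅X,Z⁆)`.
-/

namespace LinearMap.SeparatingLeft

theorem injective {R M N P : Type*} [CommRing R] [AddCommGroup M] [Module R M]
    [AddCommGroup N] [Module R N] [AddCommGroup P] [Module R P] {B : M →ₗ[R] N →ₗ[R] P}
    (hB : B.SeparatingLeft) : Function.Injective B :=
  LinearMap.ker_eq_bot.mp (separatingLeft_iff_ker_eq_bot.mp hB)

theorem existsUnique_apply_eq {K V M N : Type*} [Field K] [AddCommGroup V] [Module K V]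
    [FiniteDimensional K V] [AddCommMonoid M] [Module K M] [AddCommMonoid N] [Module K N]
    {θ : V →ₗ[K] V →ₗ[K] K} (hθ : θ.SeparatingLeft) (T : M →ₗ[K] N →ₗ[K] Module.Dual K V) :
    ∃! D : M →ₗ[K] N →ₗ[K] V, ∀ m n z, θ (D m n) z = T m n z := by
  let e : V ≃ₗ[K] Module.Dual K V :=
    θ.linearEquivOfInjective hθ.injective Subspace.dual_finrank_eq.symm
  have he (f : Module.Dual K V) (z : V) : θ (e.symm f) z = f z :=
    congr($(e.apply_symm_apply f) z)
  refine ⟨T.compr₂ e.symm.toLinearMap, fun m n z => he _ z, fun D hD => ?_⟩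
  ext m n
  exact hθ.injective (LinearMap.ext fun z => (hD m n z).trans (he _ z).symm)

end LinearMap.SeparatingLeft

section SymplecticAffine

variable {R L : Type*} [CommRing R] [LieRing L] [LieAlgebra R L]
  {θ : L →ₗ[R] L →ₗ[R] R} {D : L →ₗ[R] L →ₗ[R] L}

variable (θ) in
noncomputable def symplecticDual : L →ₗ[R] L →ₗ[R] Module.Dual R L :=
  ((LinearMap.llcomp R L L R).flip.compl₂ θ).comp (-(LieAlgebra.ad R L : L →ₗ[R] Module.End R L))

@[simp]
theorem symplecticDual_apply (X Y Z : L) : symplecticDual θ X Y Z = -θ Y ⁅X, Z⁆ := by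
  simp [symplecticDual]

theorem lie_apply_eq_sub_of_cocycle (hθ : θ.IsAlt)
    (hcocycle : ∀ X Y Z : L, θ ⁅X, Y⁆ Z + θ ⁅Y, Z⁆ X + θ ⁅Z, X⁆ Y = 0) (X Y Z : L) :
    θ ⁅X, Y⁆ Z = θ X ⁅Y, Z⁆ - θ Y ⁅X, Z⁆ := by
  have h₁ : θ ⁅Y, Z⁆ X = -θ X ⁅Y, Z⁆ := (hθ.neg _ _).symm
  have h₂ : θ ⁅Z, X⁆ Y = θ Y ⁅X, Z⁆ := by rw [← hθ.neg, ← lie_skew, map_neg, neg_neg]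
  linear_combination hcocycle X Y Z - h₁ - h₂

theorem sub_swap_eq_lie_of_symplectic (hθ : θ.IsAlt) (hsep : θ.SeparatingLeft)
    (hcocycle : ∀ X Y Z : L, θ ⁅X, Y⁆ Z + θ ⁅Y, Z⁆ X + θ ⁅Z, X⁆ Y = 0)
    (hD : ∀ X Y Z : L, θ (D X Y) Z = -θ Y ⁅X, Z⁆) (X Y : L) :
    D X Y - D Y X = ⁅X, Y⁆ := by
  refine hsep.injective (LinearMap.ext fun Z => ?_)
  rw [map_sub, LinearMap.sub_apply, hD, hD, lie_apply_eq_sub_of_cocycle hθ hcocycle]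
  ring

theorem sub_comm_eq_apply_lie_of_symplectic (hsep : θ.SeparatingLeft)
    (hD : ∀ X Y Z : L, θ (D X Y) Z = -θ Y ⁅X, Z⁆) (X Y Z : L) :
    D X (D Y Z) - D Y (D X Z) = D ⁅X, Y⁆ Z := by
  have hDD : ∀ X Y W : L, θ (D X (D Y Z)) W = θ Z ⁅Y, ⁅X, W⁆⁆ := fun X Y W => by
    rw [hD, hD, neg_neg]
  refine hsep.injective (LinearMap.ext fun W => ?_)
  rw [map_sub, LinearMap.sub_apply, hDD, hDD, hD, lie_lie, map_sub]
  ring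

end SymplecticAffine

/-- Let `g` be a finite-dimensional real Lie algebra with a symplectic form `θ`.
Then there is a unique bilinear map `∇` with `θ(∇(X,Y),Z) = −θ(Y,[X,Z])`, and any such `∇` is an
affine structure on `g`: `∇(X,Y) − ∇(Y,X) = [X,Y]` and
`∇(X,∇(Y,Z)) − ∇(Y,∇(X,Z)) = ∇([X,Y],Z)`. -/
theorem symplectic_affine_structure_exists_unique
    (L : Type*) [LieRing L] [LieAlgebra ℝ L] [FiniteDimensional ℝ L]
    (θ : L →ₗ[ℝ] L →ₗ[ℝ] ℝ)
    (halt : ∀ X : L, θ X X = 0)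
    (hnondeg : ∀ X : L, (∀ Y : L, θ X Y = 0) → X = 0)
    (hcocycle : ∀ X Y Z : L, θ ⁅X, Y⁆ Z + θ ⁅Y, Z⁆ X + θ ⁅Z, X⁆ Y = 0) :
    (∃! D : L →ₗ[ℝ] L →ₗ[ℝ] L, ∀ X Y Z : L, θ (D X Y) Z = -θ Y ⁅X, Z⁆) ∧
      (∀ D : L →ₗ[ℝ] L →ₗ[ℝ] L, (∀ X Y Z : L, θ (D X Y) Z = -θ Y ⁅X, Z⁆) →
        (∀ X Y : L, D X Y - D Y X = ⁅X, Y⁆) ∧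
        (∀ X Y Z : L, D X (D Y Z) - D Y (D X Z) = D ⁅X, Y⁆ Z)) := by
  have hsep : θ.SeparatingLeft := hnondeg
  refine ⟨by simpa using hsep.existsUnique_apply_eq (symplecticDual θ), fun D hD => ?_⟩
  exact ⟨sub_swap_eq_lie_of_symplectic halt hsep hcocycle hD,
    sub_comm_eq_apply_lie_of_symplectic hsep hD⟩
end

section
/- Let g be a finite-dimensional real Lie algebra with alternating bilinear 2-cocycle θ, let ∇ be an affine structure on g, let φ : g × g → ℝ be bilinear with φ(X,Y) − φ(Y,X) = θ(X,Y), and let ∇̃ be a bilinear map on the central extension g̃ = g ⊕ ℝ satisfying conditions (*). If C((X,0),(Y,0),(Z,0)) = 0 for all X, Y, Z ∈ g, then the vectors V_X = π(∇̃((X,0),(0,1))) satisfy φ(Y,Z)·V_X − φ(X,Z)·V_Y − θ(X,Y)·V_Z = 0 for all X, Y, Z ∈ g. -/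
/-- With `∇̃` a bilinear map satisfying conditions (*) on the central extension
`g̃ = g ⊕ ℝ`, if the curvature `C((X,0),(Y,0),(Z,0))` vanishes for all `X, Y, Z ∈ g`, then the
vectors `V_X = π(∇̃((X,0),(0,1)))` satisfy
`φ(Y,Z)·V_X − φ(X,Z)·V_Y − θ(X,Y)·V_Z = 0` for all `X, Y, Z ∈ g`. -/
theorem curvature_vanishing_implies_V_relation
    (L : Type*) [LieRing L] [LieAlgebra ℝ L] [FiniteDimensional ℝ L]
    (θ : L →ₗ[ℝ] L →ₗ[ℝ] ℝ)
    (halt : ∀ X : L, θ X X = 0)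
    (hcocycle : ∀ X Y Z : L, θ ⁅X, Y⁆ Z + θ ⁅Y, Z⁆ X + θ ⁅Z, X⁆ Y = 0)
    (D : L →ₗ[ℝ] L →ₗ[ℝ] L)
    (hDtorsion : ∀ X Y : L, D X Y - D Y X = ⁅X, Y⁆)
    (hDflat : ∀ X Y Z : L, D X (D Y Z) - D Y (D X Z) = D ⁅X, Y⁆ Z)
    (φ : L →ₗ[ℝ] L →ₗ[ℝ] ℝ)
    (hφ : ∀ X Y : L, φ X Y - φ Y X = θ X Y)
    (Dt : (L × ℝ) →ₗ[ℝ] (L × ℝ) →ₗ[ℝ] (L × ℝ))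
    (hstar1 : ∀ X Y : L, Dt (X, (0 : ℝ)) (Y, (0 : ℝ)) = (D X Y, φ X Y))
    (hstar2 : ∀ (X : L) (lam : ℝ), Dt (X, (0 : ℝ)) ((0 : L), lam) = Dt ((0 : L), lam) (X, (0 : ℝ)))
    (C : (L × ℝ) → (L × ℝ) → (L × ℝ) → (L × ℝ))
    (hC : ∀ U V W : L × ℝ,
      C U V W = Dt U (Dt V W) - Dt V (Dt U W) - Dt (⁅U.1, V.1⁆, θ U.1 V.1) W)
    (hvanish : ∀ X Y Z : L, C (X, (0 : ℝ)) (Y, (0 : ℝ)) (Z, (0 : ℝ)) = 0) :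
    ∀ X Y Z : L,
      φ Y Z • (Dt (X, (0 : ℝ)) ((0 : L), (1 : ℝ))).1
        - φ X Z • (Dt (Y, (0 : ℝ)) ((0 : L), (1 : ℝ))).1
        - θ X Y • (Dt (Z, (0 : ℝ)) ((0 : L), (1 : ℝ))).1 = 0 := by

  -- decomposition lemma
  have hdec : ∀ (U : L × ℝ) (A : L) (c : ℝ),
      Dt U (A, c) = Dt U (A, 0) + c • Dt U ((0 : L), 1) := by
    intro U A c
    have : (A, c) = (A, (0 : ℝ)) + c • ((0 : L), (1 : ℝ)) := by
      rw [Prod.smul_mk, Prod.mk_add_mk, smul_zero, add_zero, smul_eq_mul, mul_one, zero_add]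
    rw [this, map_add, map_smul]
  intro X Y Z
  have h := hvanish X Y Z
  rw [hC] at h
  simp only [hstar1] at h
  rw [hdec (X, (0:ℝ)) (D Y Z) (φ Y Z), hdec (Y, (0:ℝ)) (D X Z) (φ X Z)] at h
  have h3 : Dt (⁅X, Y⁆, θ X Y) (Z, (0:ℝ))
      = Dt (⁅X, Y⁆, (0:ℝ)) (Z, (0:ℝ)) + θ X Y • Dt ((0:L), 1) (Z, (0:ℝ)) := by
    have : ((⁅X, Y⁆, θ X Y) : L × ℝ) = (⁅X, Y⁆, (0:ℝ)) + θ X Y • ((0 : L), (1 : ℝ)) := by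
      rw [Prod.smul_mk, Prod.mk_add_mk, smul_zero, add_zero, smul_eq_mul, mul_one, zero_add]
    rw [this, map_add, map_smul, LinearMap.add_apply, LinearMap.smul_apply]
  rw [h3, ← hstar2 Z (1:ℝ)] at h
  simp only [hstar1] at h
  have h1 := congrArg Prod.fst h
  simp only [Prod.fst_add, Prod.fst_sub, Prod.smul_fst, Prod.fst_zero] at h1
  have hflat := hDflat X Y Z
  have e : D X (D Y Z) - D Y (D X Z) - D ⁅X, Y⁆ Z = 0 := sub_eq_zero.mpr hflat
  have h2 : (D X (D Y Z) - D Y (D X Z) - D ⁅X, Y⁆ Z) +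
      (φ Y Z • (Dt (X, (0:ℝ)) ((0:L), 1)).1 - φ X Z • (Dt (Y, (0:ℝ)) ((0:L), 1)).1
        - θ X Y • (Dt (Z, (0:ℝ)) ((0:L), 1)).1) = 0 := by
    calc _ = D X (D Y Z) + φ Y Z • (Dt (X, (0:ℝ)) ((0:L), 1)).1
          - (D Y (D X Z) + φ X Z • (Dt (Y, (0:ℝ)) ((0:L), 1)).1)
          - (D ⁅X, Y⁆ Z + θ X Y • (Dt (Z, (0:ℝ)) ((0:L), 1)).1) := by abel
      _ = 0 := h1
  rw [e, zero_add] at h2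
  exact h2
end

section
/- Let V be a real vector space of finite dimension at least 4, θ a nondegenerate alternating bilinear form on V, φ : V × V → ℝ a bilinear map with φ(X,Y) − φ(Y,X) = θ(X,Y) for all X, Y, and v : V → V a linear map such that φ(Y,Z)·v(X) − φ(X,Z)·v(Y) − θ(X,Y)·v(Z) = 0 for all X, Y, Z ∈ V. Then v = 0. -/
private lemma scalar_zero
    (V : Type*) [AddCommGroup V] [Module ℝ V] [FiniteDimensional ℝ V]
    (hdim : 4 ≤ Module.finrank ℝ V)
    (θ : V →ₗ[ℝ] V →ₗ[ℝ] ℝ)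
    (halt : ∀ X : V, θ X X = 0)
    (hnondeg : ∀ X : V, (∀ Y : V, θ X Y = 0) → X = 0)
    (φ : V →ₗ[ℝ] V →ₗ[ℝ] ℝ)
    (h : V →ₗ[ℝ] ℝ)
    (hrel : ∀ X Y Z : V, φ Y Z * h X - φ X Z * h Y - θ X Y * h Z = 0) :
    h = 0 := by
  by_contra h0
  obtain ⟨e, he⟩ : ∃ e, h e ≠ 0 := by
    by_contra hc; push_neg at hc
    exact h0 (LinearMap.ext fun x => by simp [hc x])
  have hskew : ∀ X Y : V, θ Y X = - θ X Y := by
    intro X Y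
    have h1 := halt (X + Y)
    simp only [map_add, LinearMap.add_apply, halt] at h1
    linarith
  have hker : ∀ X Y : V, h X = 0 → h Y = 0 → θ X Y = 0 := by
    intro X Y hX hY
    have h1 := hrel X Y e
    rw [hX, hY] at h1
    simp only [mul_zero, zero_sub, sub_zero, neg_eq_zero, mul_eq_zero] at h1
    tauto
  have hform : ∀ X Y : V, h e * θ X Y = h Y * θ X e + h X * θ e Y := by
    intro X Y
    have h1 : θ (h e • X - h X • e) (h e • Y - h Y • e) = 0 := by
      apply hker
      · simp [smul_eq_mul]; ring
      · simp [smul_eq_mul]; ring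
    simp only [map_sub, map_smul, LinearMap.sub_apply, LinearMap.smul_apply,
      smul_eq_mul] at h1
    have h3 : h e * (h e * θ X Y - (h Y * θ X e + h X * θ e Y)) = 0 := by
      linear_combination h1 - h X * h Y * halt e
    rcases mul_eq_zero.mp h3 with h4 | h4
    · exact absurd h4 he
    · linarith
  obtain ⟨x, hx0, hhx, hex⟩ : ∃ x : V, x ≠ 0 ∧ h x = 0 ∧ θ e x = 0 := by
    set f : V →ₗ[ℝ] ℝ × ℝ := h.prod (θ e) with hf
    have hker' : LinearMap.ker f ≠ ⊥ := by
      intro hk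
      have hinj := LinearMap.ker_eq_bot.mp hk
      have h5 := LinearMap.finrank_le_finrank_of_injective hinj
      have h6 : Module.finrank ℝ (ℝ × ℝ) = 2 := by simp
      omega
    obtain ⟨x, hx1, hx2⟩ := Submodule.exists_mem_ne_zero_of_ne_bot hker'
    refine ⟨x, hx2, ?_, ?_⟩
    · have := LinearMap.mem_ker.mp hx1
      rw [hf] at this
      simpa using congrArg Prod.fst this
    · have := LinearMap.mem_ker.mp hx1
      rw [hf] at this
      simpa using congrArg Prod.snd this
  apply hx0
  apply hnondeg
  intro Y
  have h7 := hform x Y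
  have hxe : θ x e = 0 := by rw [hskew e x, hex, neg_zero]
  rw [hhx, hxe] at h7
  simp only [mul_zero, zero_mul, add_zero] at h7
  exact (mul_eq_zero.mp h7).resolve_left he


/-- Let `V` be a real vector space of finite dimension at least 4, `θ` a
nondegenerate alternating bilinear form on `V`, `φ` a bilinear map with `φ(X,Y) − φ(Y,X) = θ(X,Y)`,
and `v : V → V` a linear map with `φ(Y,Z)·v(X) − φ(X,Z)·v(Y) − θ(X,Y)·v(Z) = 0` for all
`X, Y, Z`.  Then `v = 0`. -/
theorem v_eq_zero_of_relation
    (V : Type*) [AddCommGroup V] [Module ℝ V] [FiniteDimensional ℝ V]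
    (hdim : 4 ≤ Module.finrank ℝ V)
    (θ : V →ₗ[ℝ] V →ₗ[ℝ] ℝ)
    (halt : ∀ X : V, θ X X = 0)
    (hnondeg : ∀ X : V, (∀ Y : V, θ X Y = 0) → X = 0)
    (φ : V →ₗ[ℝ] V →ₗ[ℝ] ℝ)
    (hφ : ∀ X Y : V, φ X Y - φ Y X = θ X Y)
    (v : V →ₗ[ℝ] V)
    (hv : ∀ X Y Z : V, φ Y Z • v X - φ X Z • v Y - θ X Y • v Z = 0) :
    v = 0 := by
  have hnt : Nontrivial V := Module.nontrivial_of_finrank_pos (R := ℝ) (by omega)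
  obtain ⟨X0, hX0⟩ := exists_ne (0 : V)
  obtain ⟨Y0, hc0⟩ : ∃ Y0, θ X0 Y0 ≠ 0 := by
    by_contra hc; push_neg at hc; exact hX0 (hnondeg X0 hc)
  set c := θ X0 Y0 with hcdef
  set a := v X0 with hadef
  set b := v Y0 with hbdef
  have hcv : ∀ Z, c • v Z = φ Y0 Z • a - φ X0 Z • b := by
    intro Z
    have h' := hv X0 Y0 Z
    rw [← sub_eq_zero]
    calc c • v Z - (φ Y0 Z • a - φ X0 Z • b)
        = -(φ Y0 Z • v X0 - φ X0 Z • v Y0 - θ X0 Y0 • v Z) := by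
          rw [hadef, hbdef, hcdef]; abel
      _ = 0 := by rw [h', neg_zero]
  by_cases hP : ∀ s t : ℝ, s • a + t • b = 0 → s = 0 ∧ t = 0
  · have e1 : ∀ X Y Z : V,
        (φ Y Z * φ Y0 X - φ X Z * φ Y0 Y - θ X Y * φ Y0 Z) • a
        + (-(φ Y Z * φ X0 X - φ X Z * φ X0 Y - θ X Y * φ X0 Z)) • b = 0 := by
      intro X Y Z
      have h1 := hcv X; have h2 := hcv Y; have h3 := hcv Z
      have h4 := hv X Y Z
      calc (φ Y Z * φ Y0 X - φ X Z * φ Y0 Y - θ X Y * φ Y0 Z) • a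
        + (-(φ Y Z * φ X0 X - φ X Z * φ X0 Y - θ X Y * φ X0 Z)) • b
          = φ Y Z • (φ Y0 X • a - φ X0 X • b) - φ X Z • (φ Y0 Y • a - φ X0 Y • b)
            - θ X Y • (φ Y0 Z • a - φ X0 Z • b) := by module
        _ = φ Y Z • (c • v X) - φ X Z • (c • v Y) - θ X Y • (c • v Z) := by
            rw [h1, h2, h3]
        _ = c • (φ Y Z • v X - φ X Z • v Y - θ X Y • v Z) := by module
        _ = 0 := by rw [h4, smul_zero]
    have hY0' : (φ Y0 : V →ₗ[ℝ] ℝ) = 0 :=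
      scalar_zero V hdim θ halt hnondeg φ (φ Y0)
        (fun X Y Z => (hP _ _ (e1 X Y Z)).1)
    have hX0' : (φ X0 : V →ₗ[ℝ] ℝ) = 0 :=
      scalar_zero V hdim θ halt hnondeg φ (φ X0)
        (fun X Y Z => neg_eq_zero.mp (hP _ _ (e1 X Y Z)).2)
    have : c = 0 := by
      rw [hcdef, ← hφ X0 Y0, hX0', hY0']; simp
    exact absurd this hc0
  · push_neg at hP
    obtain ⟨s, t, hst, hne⟩ := hP
    obtain ⟨h, w, hw⟩ : ∃ (h : V →ₗ[ℝ] ℝ) (w : V), ∀ Z, v Z = h Z • w := by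
      rcases eq_or_ne s 0 with hs | hs
      · have ht : t ≠ 0 := hne hs
        have hb0 : b = 0 := by
          rw [hs, zero_smul, zero_add] at hst
          exact (smul_eq_zero.mp hst).resolve_left ht
        refine ⟨c⁻¹ • (φ Y0), a, fun Z => ?_⟩
        have h1 := hcv Z
        rw [hb0, smul_zero, sub_zero] at h1
        calc v Z = c⁻¹ • (c • v Z) := by
              rw [smul_smul, inv_mul_cancel₀ hc0, one_smul]
          _ = c⁻¹ • (φ Y0 Z • a) := by rw [h1]
          _ = ((c⁻¹ • (φ Y0 : V →ₗ[ℝ] ℝ)) Z) • a := by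
              simp [LinearMap.smul_apply, smul_smul]
      · have ha' : a = (-(t/s)) • b := by
          have h1 : s • a = -(t • b) := eq_neg_of_add_eq_zero_left hst
          calc a = s⁻¹ • (s • a) := by
                rw [smul_smul, inv_mul_cancel₀ hs, one_smul]
            _ = s⁻¹ • (-(t • b)) := by rw [h1]
            _ = (-(t/s)) • b := by
                rw [smul_neg, smul_smul]
                rw [← neg_smul]
                congr 1
                field_simp
        refine ⟨c⁻¹ • ((-(t/s)) • (φ Y0 : V →ₗ[ℝ] ℝ) - φ X0), b, fun Z => ?_⟩
        have h1 := hcv Z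
        rw [ha'] at h1
        calc v Z = c⁻¹ • (c • v Z) := by
              rw [smul_smul, inv_mul_cancel₀ hc0, one_smul]
          _ = c⁻¹ • (φ Y0 Z • ((-(t/s)) • b) - φ X0 Z • b) := by rw [h1]
          _ = ((c⁻¹ • ((-(t/s)) • (φ Y0 : V →ₗ[ℝ] ℝ) - φ X0)) Z) • b := by
              simp only [LinearMap.smul_apply, LinearMap.sub_apply, smul_eq_mul]
              module
    rcases eq_or_ne w 0 with hw0 | hw0
    · ext Z; simp [hw Z, hw0]
    · have hrel : ∀ X Y Z : V, φ Y Z * h X - φ X Z * h Y - θ X Y * h Z = 0 := by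
        intro X Y Z
        have h4 := hv X Y Z
        rw [hw X, hw Y, hw Z] at h4
        have h5 : (φ Y Z * h X - φ X Z * h Y - θ X Y * h Z) • w = 0 := by
          rw [← h4]; module
        exact (smul_eq_zero.mp h5).resolve_right hw0
      have h0 : h = 0 := scalar_zero V hdim θ halt hnondeg φ h hrel
      ext Z
      rw [LinearMap.zero_apply, hw Z, h0, LinearMap.zero_apply, zero_smul]
end

section
/- Let g be a finite-dimensional nilpotent real Lie algebra of dimension at least 4 with symplectic form θ, let ∇ be the symplectic affine structure on g, let g̃ = g ⊕ ℝ be the one-dimensional central extension, and let ∇̃ be a bilinear map on g̃ satisfying conditions (*) with φ = θ/2. If ∇̃ is an affine structure on the Lie algebra g̃, then: (1) π(∇̃((X,0),(0,1))) = 0 for all X ∈ g, so that ∇̃((X,0),(0,1)) = (0, a_X) where a : X ↦ a_X is a linear form on g; (2) ∇̃((0,1),(0,1)) = 0; (3) a_{[X,Y]} = 0 for all X, Y ∈ g, i.e. a is a one-dimensional linear representation of g; and (4) θ([X,Y],Z) + θ(Y,Z)·a_X − θ(X,Z)·a_Y − 2θ(X,Y)·a_Z = 0 for all X, Y, Z ∈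 g. -/
/-!
Write `T X = ∇̃((X,0),(0,1))` and `e = (0,1)`. Since `∇̃` is bilinear and `T X = ∇̃(e,(X,0))`,
`∇̃` is determined by `∇`, `θ/2`, `T` and `∇̃(e,e)`, so flatness of `∇̃` becomes a handful of
identities. On three vectors of `g` it reads
`θ(Y,Z) T X − θ(X,Z) T Y − 2 θ(X,Y) T Z = (0, −θ([X,Y],Z))`, because `∇` itself is flat.
Its first component at `Z = X` is `3 θ(X,Y) π(T X) = 0`, so `π ∘ T = 0` by nondegeneracy,
and its second component is (4). Flatness on `(X,0), e, e` then gives `θ(X, π∇̃(e,e)) = 0`, and on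
`(X,0), (Y,0), e` gives `a_{[X,Y]} = −θ(X,Y) d` with `d` the second component of `∇̃(e,e)`.
A nonzero central `X`, which exists since `g` is nilpotent, then forces `d = 0`.
-/

section SymplecticAffine

variable {R L : Type*} [CommRing R] [LieRing L] [LieAlgebra R L]
  {θ : L →ₗ[R] L →ₗ[R] R} {D : L →ₗ[R] L →ₗ[R] L}

theorem apply_symplecticAffine_right (halt : θ.IsAlt)
    (hD : ∀ X Y Z : L, θ (D X Y) Z = -θ Y ⁅X, Z⁆) (X Y Z : L) :
    θ X (D Y Z) = θ ⁅X, Y⁆ Z := by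
  rw [← halt.neg (D Y Z) X, hD, neg_neg, ← lie_skew Y X, map_neg, halt.neg]

theorem symplecticAffine_leftSymm (hnondeg : ∀ X : L, (∀ Y : L, θ X Y = 0) → X = 0)
    (hD : ∀ X Y Z : L, θ (D X Y) Z = -θ Y ⁅X, Z⁆) (X Y Z : L) :
    D X (D Y Z) - D Y (D X Z) = D ⁅X, Y⁆ Z := by
  rw [← sub_eq_zero]
  refine hnondeg _ fun W => ?_
  simp only [map_sub, LinearMap.sub_apply, hD, lie_lie]
  ring

end SymplecticAffine

section CentralExtension

variable {R M : Type*} [CommRing R] [AddCommGroup M] [Module R M]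

theorem apply_mk_mk {Dt : (M × R) →ₗ[R] (M × R) →ₗ[R] (M × R)}
    (hcomm : ∀ X : M, Dt (X, 0) (0, 1) = Dt (0, 1) (X, 0)) (X : M) (lam : R) (Y : M) (mu : R) :
    Dt (X, lam) (Y, mu) = Dt (X, 0) (Y, 0) + mu • Dt (X, 0) (0, 1) + lam • Dt (Y, 0) (0, 1)
      + (lam * mu) • Dt (0, 1) (0, 1) := by
  have split : ∀ (Z : M) (nu : R), ((Z, nu) : M × R) = (Z, 0) + nu • (0, 1) := by
    intro Z nu
    simp
  rw [split X, split Y]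
  simp only [map_add, map_smul, LinearMap.add_apply, LinearMap.smul_apply, ← hcomm]
  module

/-- The linear form `a` of the paper. -/
def centralForm (Dt : (M × R) →ₗ[R] (M × R) →ₗ[R] (M × R)) : M →ₗ[R] R :=
  LinearMap.snd R M R ∘ₗ Dt.flip (0, 1) ∘ₗ LinearMap.inl R M R

@[simp]
theorem centralForm_apply (Dt : (M × R) →ₗ[R] (M × R) →ₗ[R] (M × R)) (X : M) :
    centralForm Dt X = (Dt (X, 0) (0, 1)).2 :=
  rfl

end CentralExtension

section FlatExtension

variable {R L : Type*} [CommRing R] [LieRing L] [LieAlgebra R L]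
  {θ : L →ₗ[R] L →ₗ[R] R} {Dt : (L × R) →ₗ[R] (L × R) →ₗ[R] (L × R)}

theorem centralForm_lie (hcomm : ∀ X : L, Dt (X, 0) (0, 1) = Dt (0, 1) (X, 0))
    (hflat : ∀ U V W : L × R, Dt U (Dt V W) - Dt V (Dt U W) = Dt (⁅U.1, V.1⁆, θ U.1 V.1) W)
    (hcentral : ∀ X : L, Dt (X, 0) (0, 1) = (0, centralForm Dt X)) (X Y : L) :
    centralForm Dt ⁅X, Y⁆ + θ X Y * (Dt (0, 1) (0, 1)).2 = 0 := by
  have h := congrArg Prod.snd (hflat (X, 0) (Y, 0) (0, 1))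
  rw [apply_mk_mk hcomm ⁅X, Y⁆ (θ X Y) 0 1, hcentral X, hcentral Y,
    apply_mk_mk hcomm X 0 0 (centralForm Dt Y), apply_mk_mk hcomm Y 0 0 (centralForm Dt X)] at h
  simp only [hcentral, Prod.mk_zero_zero, map_zero, LinearMap.zero_apply, zero_mul, zero_smul,
    smul_zero, add_zero, zero_add, mul_one, one_smul, Prod.snd_add, Prod.snd_sub, Prod.smul_snd,
    smul_eq_mul] at h
  linear_combination -h

theorem eq_zero_of_forall_apply_lie_add_mul_eq_zero [NoZeroDivisors R] [Nontrivial L]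
    [LieRing.IsNilpotent L] (hnondeg : ∀ X : L, (∀ Y : L, θ X Y = 0) → X = 0) (f : L →ₗ[R] R)
    {d : R} (h : ∀ X Y : L, f ⁅X, Y⁆ + θ X Y * d = 0) : d = 0 := by
  by_contra hd
  have := LieAlgebra.non_trivial_center_of_isNilpotent (R := R) (L := L)
  obtain ⟨z, hz⟩ := exists_ne (0 : LieAlgebra.center R L)
  refine hz (Subtype.ext (hnondeg z fun Y => ?_))
  have hzY : ⁅(z : L), Y⁆ = 0 := by
    rw [← lie_skew, z.2 Y, neg_zero]
  have hθd := h z Y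
  rw [hzY, map_zero, zero_add] at hθd
  exact (mul_eq_zero.mp hθd).resolve_right hd

end FlatExtension

section HalfThetaExtension

variable {K L : Type*} [Field K] [CharZero K] [LieRing L] [LieAlgebra K L]
  {θ : L →ₗ[K] L →ₗ[K] K} {D : L →ₗ[K] L →ₗ[K] L} {Dt : (L × K) →ₗ[K] (L × K) →ₗ[K] (L × K)}

theorem flat_horizontal (halt : θ.IsAlt) (hnondeg : ∀ X : L, (∀ Y : L, θ X Y = 0) → X = 0)
    (hD : ∀ X Y Z : L, θ (D X Y) Z = -θ Y ⁅X, Z⁆)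
    (hstar1 : ∀ X Y : L, Dt (X, 0) (Y, 0) = (D X Y, θ X Y / 2))
    (hcomm : ∀ X : L, Dt (X, 0) (0, 1) = Dt (0, 1) (X, 0))
    (hflat : ∀ U V W : L × K, Dt U (Dt V W) - Dt V (Dt U W) = Dt (⁅U.1, V.1⁆, θ U.1 V.1) W)
    (X Y Z : L) :
    θ Y Z • Dt (X, 0) (0, 1) - θ X Z • Dt (Y, 0) (0, 1) - (2 * θ X Y) • Dt (Z, 0) (0, 1)
      = (0, -θ ⁅X, Y⁆ Z) := by
  have h := hflat (X, 0) (Y, 0) (Z, 0)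
  rw [hstar1, hstar1, apply_mk_mk hcomm X 0, apply_mk_mk hcomm Y 0, apply_mk_mk hcomm _ (θ X Y),
    hstar1, hstar1, hstar1] at h
  simp only [mul_zero, zero_smul, add_zero, Prod.ext_iff, Prod.fst_add, Prod.fst_sub, Prod.snd_add,
    Prod.snd_sub, Prod.smul_fst, Prod.smul_snd, smul_eq_mul] at h ⊢
  have hXY := apply_symplecticAffine_right halt hD X Y Z
  have hYX := apply_symplecticAffine_right halt hD Y X Z
  have hskew : θ ⁅Y, X⁆ Z = -θ ⁅X, Y⁆ Z := by
    rw [← lie_skew X Y, map_neg, LinearMap.neg_apply, neg_neg]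
  constructor
  · linear_combination (norm := module) (2 : K) • (h.1 - symplecticAffine_leftSymm hnondeg hD X Y Z)
  · linear_combination 2 * h.2 - hXY + hYX + hskew

theorem apply_inl_central (halt : θ.IsAlt) (hnondeg : ∀ X : L, (∀ Y : L, θ X Y = 0) → X = 0)
    (hD : ∀ X Y Z : L, θ (D X Y) Z = -θ Y ⁅X, Z⁆)
    (hstar1 : ∀ X Y : L, Dt (X, 0) (Y, 0) = (D X Y, θ X Y / 2))
    (hcomm : ∀ X : L, Dt (X, 0) (0, 1) = Dt (0, 1) (X, 0))
    (hflat : ∀ U V W : L × K, Dt U (Dt V W) - Dt V (Dt U W) = Dt (⁅U.1, V.1⁆, θ U.1 V.1) W)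
    (X : L) :
    Dt (X, 0) (0, 1) = (0, centralForm Dt X) := by
  refine Prod.ext ?_ rfl
  have hsmul : ∀ Y, θ X Y • (Dt (X, 0) (0, 1)).1 = 0 := by
    intro Y
    have h := congrArg Prod.fst (flat_horizontal halt hnondeg hD hstar1 hcomm hflat X Y X)
    simp only [halt.self_eq_zero, zero_smul, sub_zero, Prod.fst_sub, Prod.smul_fst] at h
    rw [← halt.neg X Y] at h
    linear_combination (norm := module) (-1 / 3 : K) • h
  by_contra hb
  obtain rfl : X = 0 := hnondeg X fun Y => (smul_eq_zero.mp (hsmul Y)).resolve_right hb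
  simp [Prod.mk_zero_zero] at hb

theorem apply_central_central_fst (halt : θ.IsAlt)
    (hnondeg : ∀ X : L, (∀ Y : L, θ X Y = 0) → X = 0)
    (hstar1 : ∀ X Y : L, Dt (X, 0) (Y, 0) = (D X Y, θ X Y / 2))
    (hcomm : ∀ X : L, Dt (X, 0) (0, 1) = Dt (0, 1) (X, 0))
    (hflat : ∀ U V W : L × K, Dt U (Dt V W) - Dt V (Dt U W) = Dt (⁅U.1, V.1⁆, θ U.1 V.1) W)
    (hcentral : ∀ X : L, Dt (X, 0) (0, 1) = (0, centralForm Dt X)) :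
    (Dt (0, 1) (0, 1)).1 = 0 := by
  rcases hee : Dt (0, 1) (0, 1) with ⟨c, d⟩
  refine hnondeg c fun X => ?_
  have h := congrArg Prod.snd (hflat (X, 0) (0, 1) (0, 1))
  rw [hcentral, hee, apply_mk_mk hcomm 0 1 0 (centralForm Dt X), apply_mk_mk hcomm X 0 c d, hee,
    hstar1, hcentral] at h
  simp only [Prod.mk_zero_zero, map_zero, LinearMap.zero_apply, lie_zero, zero_mul, zero_smul,
    smul_zero, add_zero, zero_add, one_mul, Prod.snd_add, Prod.snd_sub, Prod.smul_snd,
    smul_eq_mul, Prod.snd_zero] at h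
  rw [← halt.neg]
  linear_combination -2 * h

end HalfThetaExtension

theorem case_phi_eq_half_theta_general
    (L : Type*) [LieRing L] [LieAlgebra ℝ L]
    [LieRing.IsNilpotent L]
    (hdim : 4 ≤ Module.finrank ℝ L)
    (θ : L →ₗ[ℝ] L →ₗ[ℝ] ℝ)
    (halt : ∀ X : L, θ X X = 0)
    (hnondeg : ∀ X : L, (∀ Y : L, θ X Y = 0) → X = 0)
    (D : L →ₗ[ℝ] L →ₗ[ℝ] L)
    (hD : ∀ X Y Z : L, θ (D X Y) Z = -θ Y ⁅X, Z⁆)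
    (Dt : (L × ℝ) →ₗ[ℝ] (L × ℝ) →ₗ[ℝ] (L × ℝ))
    (hstar1 : ∀ X Y : L, Dt (X, (0 : ℝ)) (Y, (0 : ℝ)) = (D X Y, θ X Y / 2))
    (hstar2 : ∀ (X : L) (lam : ℝ), Dt (X, (0 : ℝ)) ((0 : L), lam) = Dt ((0 : L), lam) (X, (0 : ℝ)))
    (hflat : ∀ U V W : L × ℝ,
      Dt U (Dt V W) - Dt V (Dt U W) = Dt (⁅U.1, V.1⁆, θ U.1 V.1) W) :
    ∃ a : L →ₗ[ℝ] ℝ,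
      (∀ X : L, Dt (X, (0 : ℝ)) ((0 : L), (1 : ℝ)) = ((0 : L), a X)) ∧
      Dt ((0 : L), (1 : ℝ)) ((0 : L), (1 : ℝ)) = 0 ∧
      (∀ X Y : L, a ⁅X, Y⁆ = 0) ∧
      (∀ X Y Z : L, θ ⁅X, Y⁆ Z + θ Y Z * a X - θ X Z * a Y - 2 * θ X Y * a Z = 0) := by
  have : Nontrivial L := Module.nontrivial_of_finrank_pos (R := ℝ) (by omega)
  have hcomm : ∀ X : L, Dt (X, 0) (0, 1) = Dt (0, 1) (X, 0) := fun X => hstar2 X 1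
  have hcentral := apply_inl_central halt hnondeg hD hstar1 hcomm hflat
  have hlie := centralForm_lie hcomm hflat hcentral
  have hd : (Dt (0, 1) (0, 1)).2 = 0 :=
    eq_zero_of_forall_apply_lie_add_mul_eq_zero hnondeg _ hlie
  refine ⟨centralForm Dt, hcentral, ?_, fun X Y => by simpa [hd] using hlie X Y, fun X Y Z => ?_⟩
  · exact Prod.ext (apply_central_central_fst halt hnondeg hstar1 hcomm hflat hcentral) hd
  · have h := congrArg Prod.snd (flat_horizontal halt hnondeg hD hstar1 hcomm hflat X Y Z)
    simp only [hcentral, Prod.snd_sub, Prod.smul_snd, smul_eq_mul] at h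
    linear_combination h

/-- (Case `φ = θ/2`.)  Let `g` be nilpotent of dimension ≥ 4 with symplectic
form `θ` and symplectic affine structure `∇`; let `∇̃` satisfy conditions (*) with `φ = θ/2` on
the central extension `g̃ = g ⊕ ℝ`.  If `∇̃` is an affine structure on `g̃`, then
`π(∇̃((X,0),(0,1))) = 0` (so `∇̃((X,0),(0,1)) = (0,a_X)` with `a` a linear form),
`∇̃((0,1),(0,1)) = 0`, `a` kills all brackets (it is a one-dimensional representation), and
`θ([X,Y],Z) + θ(Y,Z)a_X − θ(X,Z)a_Y − 2θ(X,Y)a_Z = 0` for all `X, Y, Z`. -/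
theorem case_phi_eq_half_theta
    (L : Type*) [LieRing L] [LieAlgebra ℝ L] [FiniteDimensional ℝ L]
    [LieRing.IsNilpotent L]
    (hdim : 4 ≤ Module.finrank ℝ L)
    (θ : L →ₗ[ℝ] L →ₗ[ℝ] ℝ)
    (halt : ∀ X : L, θ X X = 0)
    (hnondeg : ∀ X : L, (∀ Y : L, θ X Y = 0) → X = 0)
    (hcocycle : ∀ X Y Z : L, θ ⁅X, Y⁆ Z + θ ⁅Y, Z⁆ X + θ ⁅Z, X⁆ Y = 0)
    (D : L →ₗ[ℝ] L →ₗ[ℝ] L)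
    (hD : ∀ X Y Z : L, θ (D X Y) Z = -θ Y ⁅X, Z⁆)
    (Dt : (L × ℝ) →ₗ[ℝ] (L × ℝ) →ₗ[ℝ] (L × ℝ))
    (hstar1 : ∀ X Y : L, Dt (X, (0 : ℝ)) (Y, (0 : ℝ)) = (D X Y, θ X Y / 2))
    (hstar2 : ∀ (X : L) (lam : ℝ), Dt (X, (0 : ℝ)) ((0 : L), lam) = Dt ((0 : L), lam) (X, (0 : ℝ)))
    (htorsion : ∀ U V : L × ℝ, Dt U V - Dt V U = (⁅U.1, V.1⁆, θ U.1 V.1))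
    (hflat : ∀ U V W : L × ℝ,
      Dt U (Dt V W) - Dt V (Dt U W) = Dt (⁅U.1, V.1⁆, θ U.1 V.1) W) :
    ∃ a : L →ₗ[ℝ] ℝ,
      (∀ X : L, Dt (X, (0 : ℝ)) ((0 : L), (1 : ℝ)) = ((0 : L), a X)) ∧
      Dt ((0 : L), (1 : ℝ)) ((0 : L), (1 : ℝ)) = 0 ∧
      (∀ X Y : L, a ⁅X, Y⁆ = 0) ∧
      (∀ X Y Z : L, θ ⁅X, Y⁆ Z + θ Y Z * a X - θ X Z * a Y - 2 * θ X Y * a Z = 0) :=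
  case_phi_eq_half_theta_general L hdim θ halt hnondeg D hD Dt hstar1 hstar2 hflat
end

section
/- Let g be a finite-dimensional nilpotent real Lie algebra of dimension at least 4 with symplectic form θ, let ∇ be the symplectic affine structure on g, let g̃ = g ⊕ ℝ be the one-dimensional central extension, and let ∇̃ be a bilinear map on g̃ satisfying conditions (*) for some bilinear φ : g × g → ℝ with φ(X,Y) − φ(Y,X) = θ(X,Y). If ∇̃ is an affine structure on the Lie algebra g̃, then π(∇̃((X,0),(0,λ))) = 0 for all X ∈ g and λ ∈ ℝ; that is, the covariant derivative of any central element against any element of g stays central. -/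
/-!
Write `V X = π ∇̃((X,0),(0,1))`. Once `∇` is known to be flat, the `g`-component of the flatness
of `∇̃` on `(X,0), (Y,0), (Z,0)` reads `φ(Y,Z) V X - φ(X,Z) V Y = θ(X,Y) V Z`. If `V Z ≠ 0`, pick a
functional `f` with `f (V Z) = 1`: then `θ(X,Y) = φ(Y,Z) f(V X) - φ(X,Z) f(V Y)` has rank at most
two, so a nonzero `X` killed by both `φ(·,Z)` and `f ∘ V` (which exists in dimension `≥ 3`) lies
in the radical of `θ`, contradicting nondegeneracy.
-/

section CentralExtension

variable {R L : Type*} [CommRing R] [LieRing L] [LieAlgebra R L]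

theorem symplecticConnection_flat {θ : L →ₗ[R] L →ₗ[R] R}
    (hnondeg : ∀ X : L, (∀ Y : L, θ X Y = 0) → X = 0)
    {D : L →ₗ[R] L →ₗ[R] L} (hD : ∀ X Y Z : L, θ (D X Y) Z = -θ Y ⁅X, Z⁆) (X Y Z : L) :
    D X (D Y Z) - D Y (D X Z) = D ⁅X, Y⁆ Z := by
  rw [← sub_eq_zero]
  refine hnondeg _ fun W => ?_
  simp only [map_sub, LinearMap.sub_apply, hD, neg_neg, lie_lie]
  ring

def centralDerivative (Dt : (L × R) →ₗ[R] (L × R) →ₗ[R] (L × R)) : L →ₗ[R] L :=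
  LinearMap.fst R L R ∘ₗ Dt.flip (0, 1) ∘ₗ LinearMap.inl R L R

@[simp]
theorem centralDerivative_apply (Dt : (L × R) →ₗ[R] (L × R) →ₗ[R] (L × R)) (X : L) :
    centralDerivative Dt X = (Dt (X, 0) (0, 1)).1 :=
  rfl

theorem smul_centralDerivative_sub_smul_centralDerivative {θ φ : L →ₗ[R] L →ₗ[R] R}
    {D : L →ₗ[R] L →ₗ[R] L} (hDflat : ∀ X Y Z : L, D X (D Y Z) - D Y (D X Z) = D ⁅X, Y⁆ Z)
    {Dt : (L × R) →ₗ[R] (L × R) →ₗ[R] (L × R)}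
    (hstar1 : ∀ X Y : L, Dt (X, 0) (Y, 0) = (D X Y, φ X Y))
    (hstar2 : ∀ (X : L) (lam : R), Dt (X, 0) (0, lam) = Dt (0, lam) (X, 0))
    (hflat : ∀ U V W : L × R, Dt U (Dt V W) - Dt V (Dt U W) = Dt (⁅U.1, V.1⁆, θ U.1 V.1) W)
    (X Y Z : L) :
    φ Y Z • centralDerivative Dt X - φ X Z • centralDerivative Dt Y =
      θ X Y • centralDerivative Dt Z := by
  have hpair (P : L) (q : R) : ((P, q) : L × R) = (P, 0) + q • (0, 1) := by ext <;> simp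
  have hleft (X P : L) (q : R) : (Dt (X, 0) (P, q)).1 = D X P + q • centralDerivative Dt X := by
    rw [hpair P q, map_add, map_smul, hstar1]; rfl
  have hright (P Z : L) (q : R) : (Dt (P, q) (Z, 0)).1 = D P Z + q • centralDerivative Dt Z := by
    rw [hpair P q, map_add, map_smul, LinearMap.add_apply, LinearMap.smul_apply, hstar1, ← hstar2]
    rfl
  have h := congrArg Prod.fst (hflat (X, 0) (Y, 0) (Z, 0))
  simp only [hstar1, Prod.fst_sub, hleft, hright] at h
  linear_combination (norm := module) h - hDflat X Y Z

end CentralExtension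

section LinearAlgebra

variable {K L : Type*} [Field K] [AddCommGroup L] [Module K L] [FiniteDimensional K L]

theorem exists_ne_zero_apply_eq_zero_of_two_lt_finrank (hdim : 2 < Module.finrank K L)
    (f g : Module.Dual K L) : ∃ X : L, X ≠ 0 ∧ f X = 0 ∧ g X = 0 := by
  have hker : LinearMap.ker (f.prod g) ≠ ⊥ :=
    LinearMap.ker_ne_bot_of_finrank_lt (by simpa using hdim)
  obtain ⟨X, hX, hX0⟩ := (Submodule.ne_bot_iff _).mp hker
  exact ⟨X, hX0, congrArg Prod.fst hX, congrArg Prod.snd hX⟩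

theorem LinearMap.eq_zero_of_smul_sub_smul_eq_smul {M : Type*} [AddCommGroup M] [Module K M]
    (hdim : 2 < Module.finrank K L) {θ φ : L →ₗ[K] L →ₗ[K] K}
    (hnondeg : ∀ X : L, (∀ Y : L, θ X Y = 0) → X = 0) {V : L →ₗ[K] M}
    (h : ∀ X Y Z : L, φ Y Z • V X - φ X Z • V Y = θ X Y • V Z) : V = 0 := by
  ext Z
  by_contra hVZ
  obtain ⟨f, hf⟩ := Module.Projective.exists_dual_eq_one K hVZ
  obtain ⟨X, hX0, hφX, hfX⟩ :=
    exists_ne_zero_apply_eq_zero_of_two_lt_finrank hdim (φ.flip Z) (f ∘ₗ V)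
  refine hX0 (hnondeg X fun Y => ?_)
  have hY := congrArg f (h X Y Z)
  rw [LinearMap.flip_apply] at hφX
  rw [LinearMap.comp_apply] at hfX
  simpa [hφX, hfX, hf] using hY.symm

end LinearAlgebra

theorem general_case_V_eq_zero_general
    (L : Type*) [LieRing L] [LieAlgebra ℝ L] [FiniteDimensional ℝ L]
    (hdim : 4 ≤ Module.finrank ℝ L)
    (θ : L →ₗ[ℝ] L →ₗ[ℝ] ℝ)
    (hnondeg : ∀ X : L, (∀ Y : L, θ X Y = 0) → X = 0)
    (D : L →ₗ[ℝ] L →ₗ[ℝ] L)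
    (hD : ∀ X Y Z : L, θ (D X Y) Z = -θ Y ⁅X, Z⁆)
    (φ : L →ₗ[ℝ] L →ₗ[ℝ] ℝ)
    (Dt : (L × ℝ) →ₗ[ℝ] (L × ℝ) →ₗ[ℝ] (L × ℝ))
    (hstar1 : ∀ X Y : L, Dt (X, (0 : ℝ)) (Y, (0 : ℝ)) = (D X Y, φ X Y))
    (hstar2 : ∀ (X : L) (lam : ℝ), Dt (X, (0 : ℝ)) ((0 : L), lam) = Dt ((0 : L), lam) (X, (0 : ℝ)))
    (hflat : ∀ U V W : L × ℝ,
      Dt U (Dt V W) - Dt V (Dt U W) = Dt (⁅U.1, V.1⁆, θ U.1 V.1) W) :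
    ∀ (X : L) (lam : ℝ), (Dt (X, (0 : ℝ)) ((0 : L), lam)).1 = 0 := by
  have hV : centralDerivative Dt = 0 :=
    LinearMap.eq_zero_of_smul_sub_smul_eq_smul (by omega) hnondeg
      (smul_centralDerivative_sub_smul_centralDerivative (symplecticConnection_flat hnondeg hD)
        hstar1 hstar2 hflat)
  intro X lam
  have hlam : ((0 : L), lam) = lam • ((0 : L), (1 : ℝ)) := by ext <;> simp
  rw [hlam, map_smul, Prod.smul_fst, ← centralDerivative_apply, hV, LinearMap.zero_apply,
    smul_zero]

/-- (General case.)  Let `g` be nilpotent of dimension ≥ 4 with symplectic form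
`θ` and symplectic affine structure `∇`, and `∇̃` a bilinear map on the central extension
`g̃ = g ⊕ ℝ` satisfying conditions (*) for some bilinear `φ` with `φ(X,Y) − φ(Y,X) = θ(X,Y)`.
If `∇̃` is an affine structure on `g̃`, then `π(∇̃((X,0),(0,λ))) = 0` for all `X ∈ g`, `λ ∈ ℝ`. -/
theorem general_case_V_eq_zero
    (L : Type*) [LieRing L] [LieAlgebra ℝ L] [FiniteDimensional ℝ L]
    [LieRing.IsNilpotent L]
    (hdim : 4 ≤ Module.finrank ℝ L)
    (θ : L →ₗ[ℝ] L →ₗ[ℝ] ℝ)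
    (halt : ∀ X : L, θ X X = 0)
    (hnondeg : ∀ X : L, (∀ Y : L, θ X Y = 0) → X = 0)
    (hcocycle : ∀ X Y Z : L, θ ⁅X, Y⁆ Z + θ ⁅Y, Z⁆ X + θ ⁅Z, X⁆ Y = 0)
    (D : L →ₗ[ℝ] L →ₗ[ℝ] L)
    (hD : ∀ X Y Z : L, θ (D X Y) Z = -θ Y ⁅X, Z⁆)
    (φ : L →ₗ[ℝ] L →ₗ[ℝ] ℝ)
    (hφ : ∀ X Y : L, φ X Y - φ Y X = θ X Y)
    (Dt : (L × ℝ) →ₗ[ℝ] (L × ℝ) →ₗ[ℝ] (L × ℝ))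
    (hstar1 : ∀ X Y : L, Dt (X, (0 : ℝ)) (Y, (0 : ℝ)) = (D X Y, φ X Y))
    (hstar2 : ∀ (X : L) (lam : ℝ), Dt (X, (0 : ℝ)) ((0 : L), lam) = Dt ((0 : L), lam) (X, (0 : ℝ)))
    (htorsion : ∀ U V : L × ℝ, Dt U V - Dt V U = (⁅U.1, V.1⁆, θ U.1 V.1))
    (hflat : ∀ U V W : L × ℝ,
      Dt U (Dt V W) - Dt V (Dt U W) = Dt (⁅U.1, V.1⁆, θ U.1 V.1) W) :
    ∀ (X : L) (lam : ℝ), (Dt (X, (0 : ℝ)) ((0 : L), lam)).1 = 0 :=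
  general_case_V_eq_zero_general L hdim θ hnondeg D hD φ Dt hstar1 hstar2 hflat
end

section
/- Let g be a finite-dimensional nilpotent real Lie algebra with symplectic form θ, let ∇ be the symplectic affine structure on g, let g̃ = g ⊕ ℝ be the one-dimensional central extension, and let φ : g × g → ℝ be bilinear with φ(X,Y) − φ(Y,X) = θ(X,Y). Define the bilinear map ∇̃ on g̃ by ∇̃((X,a),(Y,b)) = (∇(X,Y), φ(X,Y)) for all X, Y ∈ g and a, b ∈ ℝ. Then ∇̃ is an affine structure on the Lie algebra g̃ if and only if φ(X,∇(Y,Z)) − φ(Y,∇(X,Z)) − φ([X,Y],Z) = 0 for all X, Y, Z ∈ g, i.e. if and only if φ is a 2-cocycle of the Vinberg (left-symmetric) algebra (g,∇) with values in the trivial module. -/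
/-- (Trivial representation case of the Theorem.)  With `∇` the symplectic
affine structure on a nilpotent symplectic Lie algebra `(g,θ)` and `φ` bilinear with
`φ(X,Y) − φ(Y,X) = θ(X,Y)`, the bilinear map `∇̃((X,a),(Y,b)) = (∇(X,Y), φ(X,Y))` on the central
extension `g̃ = g ⊕ ℝ` is an affine structure on `g̃` if and only if
`φ(X,∇(Y,Z)) − φ(Y,∇(X,Z)) − φ([X,Y],Z) = 0` for all `X, Y, Z`, i.e. iff `φ` is a 2-cocycle of
the Vinberg algebra `(g,∇)` with values in the trivial module. -/
theorem trivial_representation_case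
    (L : Type*) [LieRing L] [LieAlgebra ℝ L] [FiniteDimensional ℝ L]
    [LieRing.IsNilpotent L]
    (θ : L →ₗ[ℝ] L →ₗ[ℝ] ℝ)
    (halt : ∀ X : L, θ X X = 0)
    (hnondeg : ∀ X : L, (∀ Y : L, θ X Y = 0) → X = 0)
    (hcocycle : ∀ X Y Z : L, θ ⁅X, Y⁆ Z + θ ⁅Y, Z⁆ X + θ ⁅Z, X⁆ Y = 0)
    (D : L →ₗ[ℝ] L →ₗ[ℝ] L)
    (hD : ∀ X Y Z : L, θ (D X Y) Z = -θ Y ⁅X, Z⁆)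
    (φ : L →ₗ[ℝ] L →ₗ[ℝ] ℝ)
    (hφ : ∀ X Y : L, φ X Y - φ Y X = θ X Y)
    (Dt : (L × ℝ) →ₗ[ℝ] (L × ℝ) →ₗ[ℝ] (L × ℝ))
    (hDt : ∀ (X Y : L) (a b : ℝ), Dt (X, a) (Y, b) = (D X Y, φ X Y)) :
    ((∀ U V : L × ℝ, Dt U V - Dt V U = (⁅U.1, V.1⁆, θ U.1 V.1)) ∧
      (∀ U V W : L × ℝ,
        Dt U (Dt V W) - Dt V (Dt U W) = Dt (⁅U.1, V.1⁆, θ U.1 V.1) W)) ↔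
      (∀ X Y Z : L, φ X (D Y Z) - φ Y (D X Z) - φ ⁅X, Y⁆ Z = 0) := by
  have hanti : ∀ X Y : L, θ X Y = - θ Y X := by
    intro X Y
    have h := halt (X + Y)
    simp only [map_add, LinearMap.add_apply] at h
    rw [halt X, halt Y] at h
    linarith
  have key : ∀ X Y : L, D X Y - D Y X = ⁅X, Y⁆ := by
    intro X Y
    have h0 : D X Y - D Y X - ⁅X, Y⁆ = 0 := by
      apply hnondeg
      intro Z
      have h1 := hD X Y Z
      have h2 := hD Y X Z
      have h3 := hcocycle X Y Z
      have h4 := hanti X ⁅Y, Z⁆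
      have h5 := hanti Y ⁅X, Z⁆
      have h6 : θ ⁅Z, X⁆ Y = - θ ⁅X, Z⁆ Y := by
        rw [← lie_skew Z X, map_neg, LinearMap.neg_apply]
      simp only [map_sub, LinearMap.sub_apply, h1, h2]
      linarith
    exact sub_eq_zero.mp h0
  have hVin : ∀ X Y Z : L, D X (D Y Z) - D Y (D X Z) = D ⁅X, Y⁆ Z := by
    intro X Y Z
    have h0 : D X (D Y Z) - D Y (D X Z) - D ⁅X, Y⁆ Z = 0 := by
      apply hnondeg
      intro W
      have h1 : θ (D X (D Y Z)) W = θ Z ⁅Y, ⁅X, W⁆⁆ := by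
        rw [hD, hD]; ring
      have h2 : θ (D Y (D X Z)) W = θ Z ⁅X, ⁅Y, W⁆⁆ := by
        rw [hD, hD]; ring
      have h3 : θ (D ⁅X, Y⁆ Z) W = -θ Z ⁅⁅X, Y⁆, W⁆ := hD _ _ _
      have h4 : ⁅⁅X, Y⁆, W⁆ = ⁅X, ⁅Y, W⁆⁆ - ⁅Y, ⁅X, W⁆⁆ := lie_lie X Y W
      simp only [map_sub, LinearMap.sub_apply, h1, h2, h3, h4, map_sub]
      ring
    exact sub_eq_zero.mp h0
  constructor
  · rintro ⟨-, h2⟩ X Y Z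
    have h := h2 (X, 0) (Y, 0) (Z, 0)
    rw [hDt Y Z 0 0, hDt X Z 0 0, hDt X (D Y Z) 0 (φ Y Z),
      hDt Y (D X Z) 0 (φ X Z)] at h
    simp only [hDt ⁅X, Y⁆ Z (θ X Y) 0, Prod.mk_sub_mk, Prod.mk.injEq] at h
    linarith [h.2]
  · intro hc
    constructor
    · intro U V
      have h1 : Dt U V = (D U.1 V.1, φ U.1 V.1) := by
        rw [← Prod.mk.eta (p := U), ← Prod.mk.eta (p := V), hDt]
      have h2 : Dt V U = (D V.1 U.1, φ V.1 U.1) := by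
        rw [← Prod.mk.eta (p := U), ← Prod.mk.eta (p := V), hDt]
      rw [h1, h2, Prod.mk_sub_mk, key, hφ]
    · intro U V W
      have hW : Dt V W = (D V.1 W.1, φ V.1 W.1) := by
        rw [← Prod.mk.eta (p := V), ← Prod.mk.eta (p := W), hDt]
      have hW' : Dt U W = (D U.1 W.1, φ U.1 W.1) := by
        rw [← Prod.mk.eta (p := U), ← Prod.mk.eta (p := W), hDt]
      rw [hW, hW']
      rw [← Prod.mk.eta (p := U), ← Prod.mk.eta (p := V), ← Prod.mk.eta (p := W)]
      rw [hDt, hDt, hDt, Prod.mk_sub_mk, hVin, Prod.mk.injEq]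
      refine ⟨rfl, ?_⟩
      have := hc U.1 V.1 W.1
      linarith
end

section
/- Let g be a finite-dimensional nilpotent real Lie algebra with symplectic form θ, let ∇ be the symplectic affine structure on g, let g̃ = g ⊕ ℝ be the one-dimensional central extension, let φ : g × g → ℝ be bilinear with φ(X,Y) − φ(Y,X) = θ(X,Y), and let α : g → ℝ be a linear form. Define the bilinear map ∇̃ on g̃ by ∇̃((X,a),(Y,b)) = (∇(X,Y), φ(X,Y) + a·α(Y) + b·α(X)) for all X, Y ∈ g and a, b ∈ ℝ (so that ∇̃((X,0),(0,1)) = ∇̃((0,1),(X,0)) = (0, α(X)) and ∇̃((0,1),(0,1)) = 0). Then ∇̃ is an affine structure on the Lie algebra g̃ if and only if both of the following hold for all X, Y, Z ∈ g: (i) α(∇(X,Y)) = α(X)·α(Y) (in particular α([X,Y]) = 0, so α is a one-dimensional linear representation of g); (ii) φ(X,∇(Y,Z)) − φ(Y,∇(X,Z)) − φ([X,Y],Z) = −α(X)·φ(Y,Z) + α(Y)·φ(X,Z) + α(Z)·θ(X,Y). -/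
/-!
The torsion and flatness of the symplectic affine structure `∇` both follow from nondegeneracy
of `θ`: pairing with `θ` turns them into the cocycle identity and the Jacobi identity. The
`g`-component of `∇̃` is `∇`, so the torsion of `∇̃` vanishes because `φ X Y - φ Y X = θ X Y`,
and its curvature reduces to the `ℝ`-component. That component is affine in the central
coordinates `a, b, c` of the three arguments; its constant term is the defect of (ii), the
coefficients of `a` and `b` are defects of (i), and the coefficient of `c` is `-α[X,Y]`.
-/

namespace SymplecticAffine

variable {R L : Type*} [CommRing R] [LieRing L] [LieAlgebra R L]
  {θ : L →ₗ[R] L →ₗ[R] R} {D : L →ₗ[R] L →ₗ[R] L}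

theorem sub_swap_eq_lie (hnondeg : θ.SeparatingLeft) (halt : θ.IsAlt)
    (hcocycle : ∀ X Y Z : L, θ ⁅X, Y⁆ Z + θ ⁅Y, Z⁆ X + θ ⁅Z, X⁆ Y = 0)
    (hD : ∀ X Y Z : L, θ (D X Y) Z = -θ Y ⁅X, Z⁆) (X Y : L) :
    D X Y - D Y X = ⁅X, Y⁆ := by
  refine sub_eq_zero.mp (hnondeg _ fun Z => ?_)
  have hXZ : θ Y ⁅X, Z⁆ = θ ⁅Z, X⁆ Y := by
    rw [← halt.neg, ← lie_skew, map_neg, LinearMap.neg_apply, neg_neg]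
  have hYZ : θ X ⁅Y, Z⁆ = -θ ⁅Y, Z⁆ X := (halt.neg _ _).symm
  simp only [map_sub, LinearMap.sub_apply, hD, hXZ, hYZ]
  linear_combination -hcocycle X Y Z

theorem flat (hnondeg : θ.SeparatingLeft) (hD : ∀ X Y Z : L, θ (D X Y) Z = -θ Y ⁅X, Z⁆)
    (X Y Z : L) : D X (D Y Z) - D Y (D X Z) = D ⁅X, Y⁆ Z := by
  refine sub_eq_zero.mp (hnondeg _ fun W => ?_)
  simp only [map_sub, LinearMap.sub_apply, hD, neg_neg, lie_lie]
  ring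

end SymplecticAffine

namespace CentralExtension

variable {R L : Type*} [CommRing R] [LieRing L] [LieAlgebra R L]
  {θ φ : L →ₗ[R] L →ₗ[R] R} {D : L →ₗ[R] L →ₗ[R] L} {α : L →ₗ[R] R}
  {Dt : (L × R) →ₗ[R] (L × R) →ₗ[R] (L × R)}

theorem torsion_eq
    (hDt : ∀ (X Y : L) (a b : R), Dt (X, a) (Y, b) = (D X Y, φ X Y + a * α Y + b * α X))
    (hDsym : ∀ X Y : L, D X Y - D Y X = ⁅X, Y⁆) (hφ : ∀ X Y : L, φ X Y - φ Y X = θ X Y)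
    (U V : L × R) : Dt U V - Dt V U = (⁅U.1, V.1⁆, θ U.1 V.1) := by
  obtain ⟨X, a⟩ := U
  obtain ⟨Y, b⟩ := V
  rw [hDt, hDt, Prod.mk_sub_mk, hDsym, ← hφ]
  congr 1
  ring

theorem curvature_eq
    (hDt : ∀ (X Y : L) (a b : R), Dt (X, a) (Y, b) = (D X Y, φ X Y + a * α Y + b * α X))
    (X Y Z : L) (a b c : R) :
    Dt (X, a) (Dt (Y, b) (Z, c)) - Dt (Y, b) (Dt (X, a) (Z, c)) -
        Dt (⁅X, Y⁆, θ X Y) (Z, c) =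
      (D X (D Y Z) - D Y (D X Z) - D ⁅X, Y⁆ Z,
        (φ X (D Y Z) - φ Y (D X Z) - φ ⁅X, Y⁆ Z + α X * φ Y Z - α Y * φ X Z - α Z * θ X Y)
          + a * (α (D Y Z) - α Y * α Z) - b * (α (D X Z) - α X * α Z) - c * α ⁅X, Y⁆) := by
  simp only [hDt, Prod.mk_sub_mk]
  congr 1
  ring

theorem flat_iff
    (hDt : ∀ (X Y : L) (a b : R), Dt (X, a) (Y, b) = (D X Y, φ X Y + a * α Y + b * α X))
    (hflat : ∀ X Y Z : L, D X (D Y Z) - D Y (D X Z) = D ⁅X, Y⁆ Z) :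
    (∀ U V W : L × R, Dt U (Dt V W) - Dt V (Dt U W) = Dt (⁅U.1, V.1⁆, θ U.1 V.1) W) ↔
      ((∀ X Y : L, α (D X Y) = α X * α Y ∧ α ⁅X, Y⁆ = 0) ∧
        (∀ X Y Z : L, φ X (D Y Z) - φ Y (D X Z) - φ ⁅X, Y⁆ Z =
          -(α X * φ Y Z) + α Y * φ X Z + α Z * θ X Y)) := by
  have hcurv : ∀ (X Y Z : L) (a b c : R),
      Dt (X, a) (Dt (Y, b) (Z, c)) - Dt (Y, b) (Dt (X, a) (Z, c)) =
          Dt (⁅X, Y⁆, θ X Y) (Z, c) ↔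
        (φ X (D Y Z) - φ Y (D X Z) - φ ⁅X, Y⁆ Z + α X * φ Y Z - α Y * φ X Z - α Z * θ X Y)
          + a * (α (D Y Z) - α Y * α Z) - b * (α (D X Z) - α X * α Z) - c * α ⁅X, Y⁆ = 0 := by
    intro X Y Z a b c
    rw [← sub_eq_zero, curvature_eq hDt, Prod.mk_eq_zero, sub_eq_zero.mpr (hflat X Y Z)]
    exact and_iff_right rfl
  constructor
  · intro h
    refine ⟨fun X Y => ⟨?_, ?_⟩, fun X Y Z => ?_⟩
    · simpa [sub_eq_zero] using (hcurv 0 X Y 1 0 0).mp (h (0, 1) (X, 0) (Y, 0))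
    · simpa using (hcurv X Y 0 0 0 1).mp (h (X, 0) (Y, 0) (0, 1))
    · linear_combination (hcurv X Y Z 0 0 0).mp (h (X, 0) (Y, 0) (Z, 0))
  · rintro ⟨hα, hφ⟩ ⟨X, a⟩ ⟨Y, b⟩ ⟨Z, c⟩
    refine (hcurv X Y Z a b c).mpr ?_
    linear_combination hφ X Y Z + a * (hα Y Z).1 - b * (hα X Z).1 - c * (hα X Y).2

end CentralExtension

theorem general_representation_case_general
    (L : Type*) [LieRing L] [LieAlgebra ℝ L]
    (θ : L →ₗ[ℝ] L →ₗ[ℝ] ℝ)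
    (halt : ∀ X : L, θ X X = 0)
    (hnondeg : ∀ X : L, (∀ Y : L, θ X Y = 0) → X = 0)
    (hcocycle : ∀ X Y Z : L, θ ⁅X, Y⁆ Z + θ ⁅Y, Z⁆ X + θ ⁅Z, X⁆ Y = 0)
    (D : L →ₗ[ℝ] L →ₗ[ℝ] L)
    (hD : ∀ X Y Z : L, θ (D X Y) Z = -θ Y ⁅X, Z⁆)
    (φ : L →ₗ[ℝ] L →ₗ[ℝ] ℝ)
    (hφ : ∀ X Y : L, φ X Y - φ Y X = θ X Y)
    (α : L →ₗ[ℝ] ℝ)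
    (Dt : (L × ℝ) →ₗ[ℝ] (L × ℝ) →ₗ[ℝ] (L × ℝ))
    (hDt : ∀ (X Y : L) (a b : ℝ), Dt (X, a) (Y, b) = (D X Y, φ X Y + a * α Y + b * α X)) :
    ((∀ U V : L × ℝ, Dt U V - Dt V U = (⁅U.1, V.1⁆, θ U.1 V.1)) ∧
      (∀ U V W : L × ℝ,
        Dt U (Dt V W) - Dt V (Dt U W) = Dt (⁅U.1, V.1⁆, θ U.1 V.1) W)) ↔
      ((∀ X Y : L, α (D X Y) = α X * α Y ∧ α ⁅X, Y⁆ = 0) ∧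
        (∀ X Y Z : L, φ X (D Y Z) - φ Y (D X Z) - φ ⁅X, Y⁆ Z =
          -(α X * φ Y Z) + α Y * φ X Z + α Z * θ X Y)) := by
  have hDsym := SymplecticAffine.sub_swap_eq_lie hnondeg halt hcocycle hD
  have hflat := SymplecticAffine.flat hnondeg hD
  exact (and_iff_right (CentralExtension.torsion_eq hDt hDsym hφ)).trans
    (CentralExtension.flat_iff hDt hflat)

/-- (General case of the Theorem.)  With `∇` the symplectic affine structure on
a nilpotent symplectic Lie algebra `(g,θ)`, `φ` bilinear with `φ(X,Y) − φ(Y,X) = θ(X,Y)`, and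
`α : g → ℝ` a linear form, the bilinear map
`∇̃((X,a),(Y,b)) = (∇(X,Y), φ(X,Y) + a·α(Y) + b·α(X))` on the central extension `g̃ = g ⊕ ℝ`
is an affine structure on `g̃` if and only if, for all `X, Y, Z ∈ g`:
(i) `α(∇(X,Y)) = α(X)·α(Y)` (in particular `α([X,Y]) = 0`, so `α` is a one-dimensional linear
representation of `g`), and
(ii) `φ(X,∇(Y,Z)) − φ(Y,∇(X,Z)) − φ([X,Y],Z) = −α(X)·φ(Y,Z) + α(Y)·φ(X,Z) + α(Z)·θ(X,Y)`. -/
theorem general_representation_case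
    (L : Type*) [LieRing L] [LieAlgebra ℝ L] [FiniteDimensional ℝ L]
    [LieRing.IsNilpotent L]
    (θ : L →ₗ[ℝ] L →ₗ[ℝ] ℝ)
    (halt : ∀ X : L, θ X X = 0)
    (hnondeg : ∀ X : L, (∀ Y : L, θ X Y = 0) → X = 0)
    (hcocycle : ∀ X Y Z : L, θ ⁅X, Y⁆ Z + θ ⁅Y, Z⁆ X + θ ⁅Z, X⁆ Y = 0)
    (D : L →ₗ[ℝ] L →ₗ[ℝ] L)
    (hD : ∀ X Y Z : L, θ (D X Y) Z = -θ Y ⁅X, Z⁆)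
    (φ : L →ₗ[ℝ] L →ₗ[ℝ] ℝ)
    (hφ : ∀ X Y : L, φ X Y - φ Y X = θ X Y)
    (α : L →ₗ[ℝ] ℝ)
    (Dt : (L × ℝ) →ₗ[ℝ] (L × ℝ) →ₗ[ℝ] (L × ℝ))
    (hDt : ∀ (X Y : L) (a b : ℝ), Dt (X, a) (Y, b) = (D X Y, φ X Y + a * α Y + b * α X)) :
    ((∀ U V : L × ℝ, Dt U V - Dt V U = (⁅U.1, V.1⁆, θ U.1 V.1)) ∧
      (∀ U V W : L × ℝ,
        Dt U (Dt V W) - Dt V (Dt U W) = Dt (⁅U.1, V.1⁆, θ U.1 V.1) W)) ↔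
      ((∀ X Y : L, α (D X Y) = α X * α Y ∧ α ⁅X, Y⁆ = 0) ∧
        (∀ X Y Z : L, φ X (D Y Z) - φ Y (D X Z) - φ ⁅X, Y⁆ Z =
          -(α X * φ Y Z) + α Y * φ X Z + α Z * θ X Y)) :=
  general_representation_case_general L θ halt hnondeg hcocycle D hD φ hφ α Dt hDt
end
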